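/- Let G and H be connected graphs and let R ⊆ V(G □ H). If the projection π_G(R) is a general position set of G and |π_G(R)| = |R| (i.e., the projection to G is injective on R), then R is a general position set of G □ H. -/

import Mathlib

open SimpleGraph

/-- The interval `I_G[u,v]`: vertices lying on some shortest `u,v`-path. -/
def gpInterval {V : Type*} (G : SimpleGraph V) (u v : V) : Set V :=
  {x | ∃ p : G.Walk u v, p.length = G.dist u v ∧ x ∈ p.support}

/-- A general position set: no three (distinct) vertices of `S` lie on a common
shortest path. -/
def IsGPSet {V : Type*} (G : SimpleGraph V) (S : Set V) : Prop :=
  ∀ u ∈ S, ∀ v ∈ S, ∀ w ∈ S, u ≠ v → v ≠ w → u ≠ w → v ∉ gpInterval G u w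

/-- A maximal general position set. -/
def IsMaximalGPSet {V : Type*} (G : SimpleGraph V) (S : Set V) : Prop :=
  IsGPSet G S ∧ ∀ T : Set V, IsGPSet G T → S ⊆ T → T = S

/-- The general position number of a graph. -/
noncomputable def gpNumber {V : Type*} (G : SimpleGraph V) : ℕ :=
  sSup {n : ℕ | ∃ S : Finset V, IsGPSet G ↑S ∧ S.card = n}

/-- The lexicographic product of two simple graphs. -/
def lexProd {α β : Type*} (G : SimpleGraph α) (H : SimpleGraph β) :
    SimpleGraph (α × β) where
  Adj x y := G.Adj x.1 y.1 ∨ (x.1 = y.1 ∧ H.Adj x.2 y.2)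
  symm := by
    constructor
    intro x y h
    rcases h with h | ⟨h1, h2⟩
    · exact Or.inl h.symm
    · exact Or.inr ⟨h1.symm, h2.symm⟩
  loopless := by
    constructor
    intro x h
    rcases h with h | ⟨_, h2⟩
    · exact G.irrefl h
    · exact H.irrefl h2

/-! A shortest walk in `G □ H` splits into its `G`- and `H`-moves, and since
`d_{G □ H} = d_G + d_H` both parts are shortest walks. Hence the projection to `G`
maps intervals of `G □ H` into intervals of `G`, so three vertices of `R` on a common
geodesic would project to three distinct vertices of `π_G(R)` on a common geodesic. -/

lemma IsGPSet.of_injOn_image {V W : Type*} {G : SimpleGraph V} {G' : SimpleGraph W}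
    {f : V → W} {S : Set V}
    (hf : ∀ ⦃u v w⦄, v ∈ gpInterval G u w → f v ∈ gpInterval G' (f u) (f w))
    (hS : IsGPSet G' (f '' S)) (hinj : Set.InjOn f S) : IsGPSet G S :=
  fun u hu v hv w hw huv hvw huw hmem =>
    hS (f u) ⟨u, hu, rfl⟩ (f v) ⟨v, hv, rfl⟩ (f w) ⟨w, hw, rfl⟩
      (hinj.ne hu hv huv) (hinj.ne hv hw hvw) (hinj.ne hu hw huw) (hf hmem)

namespace SimpleGraph

variable {α β : Type*} {G : SimpleGraph α} {H : SimpleGraph β}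

lemma Reachable.dist_boxProd {x y : α × β} (h : (G □ H).Reachable x y) :
    (G □ H).dist x y = G.dist x.1 y.1 + H.dist x.2 y.2 := by
  obtain ⟨hG, hH⟩ := reachable_boxProd.mp h
  have := edist_boxProd (G := G) (H := H) x y
  rw [← h.coe_dist_eq_edist, ← hG.coe_dist_eq_edist, ← hH.coe_dist_eq_edist] at this
  exact_mod_cast this

lemma fst_mem_gpInterval_of_mem_boxProd {u v w : α × β}
    (hv : v ∈ gpInterval (G □ H) u w) : v.1 ∈ gpInterval G u.1 w.1 := by
  classical
  obtain ⟨p, hp, hvp⟩ := hv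
  obtain ⟨q, r, rfl⟩ := Walk.mem_support_iff_exists_append.mp hvp
  refine ⟨q.ofBoxProdLeft.append r.ofBoxProdLeft, ?_,
    Walk.mem_support_append_iff _ _ |>.mpr (.inl q.ofBoxProdLeft.end_mem_support)⟩
  have hdist := (q.append r).reachable.dist_boxProd
  have hG := dist_le (q.ofBoxProdLeft.append r.ofBoxProdLeft)
  have hH := dist_le (q.ofBoxProdRight.append r.ofBoxProdRight)
  rw [Walk.length_append, Walk.length_boxProd q, Walk.length_boxProd r] at hp
  simp only [Walk.length_append] at hG hH ⊢
  omega

end SimpleGraph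

theorem stmt9_general {α β : Type*} (G : SimpleGraph α) (H : SimpleGraph β)
    (R : Set (α × β))
    (hproj : IsGPSet G (Prod.fst '' R)) (hinj : Set.InjOn Prod.fst R) :
    IsGPSet (G □ H) R :=
  IsGPSet.of_injOn_image (fun _ _ _ => fst_mem_gpInterval_of_mem_boxProd) hproj hinj

/-- if the projection to `G` is injective on `R` and is a general
position set of `G`, then `R` is a general position set of `G □ H`. -/
theorem stmt9 {α β : Type*} (G : SimpleGraph α) (H : SimpleGraph β)
    (hG : G.Connected) (hH : H.Connected) (R : Set (α × β))
    (hproj : IsGPSet G (Prod.fst '' R)) (hinj : Set.InjOn Prod.fst R) :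
    IsGPSet (G □ H) R :=
  stmt9_general G H R hproj hinj
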